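/- arXiv:1404.4844 — 8 statements merged into one kernel-verified Lean document; each statement's English description precedes it below -/
import Mathlib

section
/- Critical points of the odd-quadric canonical superpotential restricted to Plücker coordinates: for the quadric Q_{2m-1}, setting p_0 = 1, p_j = ζ^j for 1 ≤ j ≤ m-1, p_j = ζ^j/2 for m ≤ j ≤ 2m-2, and p_{2m-1} = q, where ζ^{2m-1} = 4q, one has δ_ℓ = q for all 1 ≤ ℓ ≤ m-1, where δ_ℓ = ∑_{k=0}^{ℓ} (-1)^k p_{ℓ-k} p_{2m-1-ℓ+k}. -/
/-- At the nontrivial critical points of the canonical superpotential of Q_{2m-1}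
(p_0 = 1, p_j = ζ^j for 1 ≤ j ≤ m-1, p_j = ζ^j/2 for m ≤ j ≤ 2m-2, p_{2m-1} = q,
ζ^{2m-1} = 4q) one has δ_ℓ = q for all 1 ≤ ℓ ≤ m-1. -/
theorem stmt5 (m : ℕ) (hm : 2 ≤ m) (q ζ : ℂ) (hq : q ≠ 0) (hζ : ζ ^ (2 * m - 1) = 4 * q)
    (p : ℕ → ℂ) (hp0 : p 0 = 1)
    (hp1 : ∀ j, 1 ≤ j → j ≤ m - 1 → p j = ζ ^ j)
    (hp2 : ∀ j, m ≤ j → j ≤ 2 * m - 2 → p j = ζ ^ j / 2)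
    (hp3 : p (2 * m - 1) = q) :
    ∀ ℓ, 1 ≤ ℓ → ℓ ≤ m - 1 →
      ∑ k ∈ Finset.range (ℓ + 1), (-1 : ℂ) ^ k * p (ℓ - k) * p (2 * m - 1 - ℓ + k) = q := by
  intro ℓ h1 h2
  rw [Finset.sum_range_succ]
  have hlast : (-1 : ℂ) ^ ℓ * p (ℓ - ℓ) * p (2 * m - 1 - ℓ + ℓ) = (-1) ^ ℓ * q := by
    have e1 : ℓ - ℓ = 0 := by omega
    have e2 : 2 * m - 1 - ℓ + ℓ = 2 * m - 1 := by omega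
    rw [e1, e2, hp0, hp3]; ring
  have hsum : ∑ k ∈ Finset.range ℓ, (-1 : ℂ) ^ k * p (ℓ - k) * p (2 * m - 1 - ℓ + k)
      = (∑ k ∈ Finset.range ℓ, (-1 : ℂ) ^ k) * (2 * q) := by
    rw [Finset.sum_mul]
    refine Finset.sum_congr rfl fun k hk => ?_
    rw [Finset.mem_range] at hk
    have h3 : p (ℓ - k) = ζ ^ (ℓ - k) := hp1 _ (by omega) (by omega)
    have h4 : p (2 * m - 1 - ℓ + k) = ζ ^ (2 * m - 1 - ℓ + k) / 2 :=
      hp2 _ (by omega) (by omega)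
    have h5 : ζ ^ (ℓ - k) * ζ ^ (2 * m - 1 - ℓ + k) = ζ ^ (2 * m - 1) := by
      rw [← pow_add]; congr 1; omega
    rw [h3, h4, mul_assoc, mul_div_assoc', h5, hζ]
    ring
  rw [hsum, hlast, neg_one_geom_sum]
  rcases Nat.even_or_odd ℓ with h | h
  · rw [if_pos h, h.neg_one_pow]; ring
  · rw [if_neg (Nat.not_even_iff_odd.mpr h), h.neg_one_pow]; ring
end

section
/- The value of the odd-quadric canonical superpotential at its nontrivial critical points: with p_0 = 1, p_j = ζ^j (1 ≤ j ≤ m-1), p_j = ζ^j/2 (m ≤ j ≤ 2m-2), p_{2m-1} = q, and ζ^{2m-1} = 4q, the superpotential W = p_1/p_0 + ∑_{ℓ=1}^{m-1} p_{ℓ+1} p_{2m-1-ℓ}/δ_ℓ + q·p_1/p_{2m-1} evaluates to (2m-1)ζ. -/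
/-- Critical value of the canonical superpotential of Q_{2m-1} at its nontrivial
critical points: W = (2m-1)ζ, where ζ^{2m-1} = 4q. -/
theorem stmt6 (m : ℕ) (hm : 2 ≤ m) (q ζ : ℂ) (hq : q ≠ 0) (hζ : ζ ^ (2 * m - 1) = 4 * q)
    (p : ℕ → ℂ) (hp0 : p 0 = 1)
    (hp1 : ∀ j, 1 ≤ j → j ≤ m - 1 → p j = ζ ^ j)
    (hp2 : ∀ j, m ≤ j → j ≤ 2 * m - 2 → p j = ζ ^ j / 2)
    (hp3 : p (2 * m - 1) = q) :
    p 1 / p 0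
      + ∑ ℓ ∈ Finset.Icc 1 (m - 1), p (ℓ + 1) * p (2 * m - 1 - ℓ)
          / (∑ k ∈ Finset.range (ℓ + 1), (-1 : ℂ) ^ k * p (ℓ - k) * p (2 * m - 1 - ℓ + k))
      + q * p 1 / p (2 * m - 1)
    = ((2 * m - 1 : ℕ) : ℂ) * ζ := by
  obtain ⟨n, rfl⟩ : ∃ n, m = n + 2 := ⟨m - 2, by omega⟩
  -- key: each inner alternating sum equals q
  have key : ∀ ℓ, 1 ≤ ℓ → ℓ ≤ n + 1 →
      (∑ k ∈ Finset.range (ℓ + 1),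
        (-1 : ℂ) ^ k * p (ℓ - k) * p (2 * (n + 2) - 1 - ℓ + k)) = q := by
    intro ℓ h1 h2
    rw [Finset.sum_range_succ]
    have hlast : (-1 : ℂ) ^ ℓ * p (ℓ - ℓ) * p (2 * (n + 2) - 1 - ℓ + ℓ) = (-1) ^ ℓ * q := by
      have e1 : ℓ - ℓ = 0 := Nat.sub_self ℓ
      have e2 : 2 * (n + 2) - 1 - ℓ + ℓ = 2 * (n + 2) - 1 := by omega
      rw [e1, e2, hp0, hp3]; ring
    have hmid : ∀ k ∈ Finset.range ℓ,
        (-1 : ℂ) ^ k * p (ℓ - k) * p (2 * (n + 2) - 1 - ℓ + k) = (-1) ^ k * (2 * q) := by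
      intro k hk
      rw [Finset.mem_range] at hk
      rw [hp1 (ℓ - k) (by omega) (by omega), hp2 (2 * (n + 2) - 1 - ℓ + k) (by omega) (by omega)]
      have e : (ℓ - k) + (2 * (n + 2) - 1 - ℓ + k) = 2 * (n + 2) - 1 := by omega
      calc (-1 : ℂ) ^ k * ζ ^ (ℓ - k) * (ζ ^ (2 * (n + 2) - 1 - ℓ + k) / 2)
          = (-1) ^ k * (ζ ^ ((ℓ - k) + (2 * (n + 2) - 1 - ℓ + k)) / 2) := by
            rw [pow_add]; ring
        _ = (-1) ^ k * (2 * q) := by rw [e, hζ]; ring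
    rw [Finset.sum_congr rfl hmid, hlast, ← Finset.sum_mul,
      geom_sum_eq (by norm_num : (-1 : ℂ) ≠ 1)]
    field_simp
    ring
  -- each middle summand
  have hterm : ∀ ℓ ∈ Finset.Icc 1 (n + 2 - 1),
      p (ℓ + 1) * p (2 * (n + 2) - 1 - ℓ)
        / (∑ k ∈ Finset.range (ℓ + 1),
            (-1 : ℂ) ^ k * p (ℓ - k) * p (2 * (n + 2) - 1 - ℓ + k))
      = (if ℓ = n + 1 then ζ else 2 * ζ) := by
    intro ℓ hℓ
    rw [Finset.mem_Icc] at hℓ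
    have hℓ2 : ℓ ≤ n + 1 := by omega
    rw [key ℓ hℓ.1 hℓ2]
    by_cases hc : ℓ = n + 1
    · subst hc
      rw [if_pos rfl]
      have e2 : 2 * (n + 2) - 1 - (n + 1) = n + 2 := by omega
      rw [e2, hp2 (n + 2) le_rfl (by omega)]
      have h : ζ ^ (n + 2) * ζ ^ (n + 2) = ζ ^ (2 * (n + 2) - 1) * ζ := by
        rw [← pow_add, ← pow_succ]; congr 1; omega
      have e3 : ζ ^ (n + 2) / 2 * (ζ ^ (n + 2) / 2) = ζ ^ (2 * (n + 2) - 1) * ζ / 4 := by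
        rw [div_mul_div_comm, h]; norm_num
      rw [e3, hζ]
      field_simp
    · rw [if_neg hc]
      rw [hp1 (ℓ + 1) (by omega) (by omega),
        hp2 (2 * (n + 2) - 1 - ℓ) (by omega) (by omega)]
      have h : ζ ^ (ℓ + 1) * ζ ^ (2 * (n + 2) - 1 - ℓ) = ζ ^ (2 * (n + 2) - 1) * ζ := by
        rw [← pow_add, ← pow_succ]; congr 1; omega
      have e3 : ζ ^ (ℓ + 1) * (ζ ^ (2 * (n + 2) - 1 - ℓ) / 2)
          = ζ ^ (2 * (n + 2) - 1) * ζ / 2 := by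
        rw [mul_div_assoc', h]
      rw [e3, hζ]
      field_simp
      ring
  rw [Finset.sum_congr rfl hterm]
  have e4 : n + 2 - 1 = n + 1 := by omega
  rw [e4, Finset.sum_Icc_succ_top (by omega : 1 ≤ n + 1), if_pos rfl]
  have e5 : ∑ ℓ ∈ Finset.Icc 1 n, (if ℓ = n + 1 then ζ else 2 * ζ) = (n : ℂ) * (2 * ζ) := by
    rw [Finset.sum_congr rfl (fun ℓ hℓ => if_neg (by
      rw [Finset.mem_Icc] at hℓ; omega)), Finset.sum_const, Nat.card_Icc]
    simp [nsmul_eq_mul]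
  rw [e5, hp0, hp1 1 le_rfl (by omega), hp3]
  have e6 : 2 * (n + 2) - 1 = 2 * n + 3 := by omega
  rw [e6]
  push_cast
  field_simp
  ring
end

section
/- At the extra critical point of the odd quadric superpotential, the point p_1 = ⋯ = p_{2m-2} = 0, p_0 = 1, p_{2m-1} = -q satisfies all critical equations: in particular ∂W/∂p_1 = 1 + (∑_{ℓ=1}^{m-1} (-1)^ℓ p_{ℓ+1}p_{2m-1-ℓ}/δ_ℓ²)·p_{2m-2} + q/p_{2m-1} vanishes there, and the critical value W = 0. -/
/-- The extra critical point of the canonical superpotential of Q_{2m-1}: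
p_0 = 1, p_1 = ⋯ = p_{2m-2} = 0, p_{2m-1} = -q. Then δ_ℓ = (-1)^ℓ·(-q) ≠ 0,
the critical equation ∂W/∂p_1 = 0 holds, and W = 0 there. -/
theorem stmt7 (m : ℕ) (hm : 2 ≤ m) (q : ℂ) (hq : q ≠ 0)
    (p : ℕ → ℂ) (hp0 : p 0 = 1)
    (hp : ∀ j, 1 ≤ j → j ≤ 2 * m - 2 → p j = 0)
    (hplast : p (2 * m - 1) = -q)
    (δ : ℕ → ℂ)
    (hδ : ∀ ℓ, δ ℓ = ∑ k ∈ Finset.range (ℓ + 1),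
      (-1 : ℂ) ^ k * p (ℓ - k) * p (2 * m - 1 - ℓ + k)) :
    (∀ ℓ, 1 ≤ ℓ → ℓ ≤ m - 1 → δ ℓ = (-1 : ℂ) ^ ℓ * (-q) ∧ δ ℓ ≠ 0) ∧
    1 + (∑ ℓ ∈ Finset.Icc 1 (m - 1),
        (-1 : ℂ) ^ ℓ * p (ℓ + 1) * p (2 * m - 1 - ℓ) / (δ ℓ) ^ 2) * p (2 * m - 2)
      + q / p (2 * m - 1) = 0 ∧
    p 1 + (∑ ℓ ∈ Finset.Icc 1 (m - 1), p (ℓ + 1) * p (2 * m - 1 - ℓ) / δ ℓ)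
      + q * p 1 / p (2 * m - 1) = 0 := by
  have hδℓ : ∀ ℓ, 1 ≤ ℓ → ℓ ≤ m - 1 → δ ℓ = (-1 : ℂ) ^ ℓ * (-q) := by
    intro ℓ h1 h2
    rw [hδ, Finset.sum_eq_single ℓ]
    · have h3 : 2 * m - 1 - ℓ + ℓ = 2 * m - 1 := by omega
      rw [h3, Nat.sub_self, hp0, hplast]; ring
    · intro k hk hne
      have hk' : k < ℓ := by
        simp only [Finset.mem_range] at hk; omega
      have : p (ℓ - k) = 0 := hp _ (by omega) (by omega)
      rw [this]; ring
    · intro h; simp at h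
  have hne : (-q : ℂ) ≠ 0 := neg_ne_zero.mpr hq
  refine ⟨fun ℓ h1 h2 => ⟨hδℓ ℓ h1 h2, ?_⟩, ?_, ?_⟩
  · rw [hδℓ ℓ h1 h2]
    exact mul_ne_zero (pow_ne_zero _ (by norm_num)) hne
  · have h1 : p (2 * m - 2) = 0 := hp _ (by omega) (by omega)
    rw [h1, hplast, mul_zero, add_zero, div_neg, div_self hq]
    ring
  · have h1 : p 1 = 0 := hp 1 (by omega) (by omega)
    have hs : ∀ ℓ ∈ Finset.Icc 1 (m - 1),
        p (ℓ + 1) * p (2 * m - 1 - ℓ) / δ ℓ = 0 := by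
      intro ℓ hℓ
      simp only [Finset.mem_Icc] at hℓ
      have : p (ℓ + 1) = 0 := hp _ (by omega) (by omega)
      rw [this]; simp
    rw [Finset.sum_congr rfl hs, h1]
    simp
end

section
/- Przyjalkowski-type change of variables identity for odd quadrics: under the substitution z_i = ν_{i+1} for 1 ≤ i ≤ 2m-2 and z_{2m-1} = q·ν_{2m}/ν_{2m+1}, subject to ∏_{i=1}^{2m+1} ν_i = q and ν_{2m}+ν_{2m+1} = 1, one has z_1 + ⋯ + z_{2m-2} + (z_{2m-1}+q)²/(z_1⋯z_{2m-1}) = ν_1 + ⋯ + ν_{2m-1}. -/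
/-- Przyjalkowski-type change of variables for odd quadrics: with
z_i = ν_{i+1} (1 ≤ i ≤ 2m-2) and z_{2m-1} = q ν_{2m}/ν_{2m+1}, subject to
∏ν_i = q and ν_{2m}+ν_{2m+1} = 1, the Przyjalkowski superpotential equals
the Givental superpotential ν_1 + ⋯ + ν_{2m-1}. -/
theorem stmt8 (m : ℕ) (hm : 1 ≤ m) (q : ℂ) (ν : ℕ → ℂ)
    (hν : ∀ i, 1 ≤ i → i ≤ 2 * m + 1 → ν i ≠ 0)
    (hprod : ∏ i ∈ Finset.Icc 1 (2 * m + 1), ν i = q)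
    (hsum : ν (2 * m) + ν (2 * m + 1) = 1)
    (z : ℕ → ℂ)
    (hz : ∀ i, 1 ≤ i → i ≤ 2 * m - 2 → z i = ν (i + 1))
    (hzlast : z (2 * m - 1) = q * ν (2 * m) / ν (2 * m + 1)) :
    (∑ i ∈ Finset.Icc 1 (2 * m - 2), z i)
      + (z (2 * m - 1) + q) ^ 2 / ∏ i ∈ Finset.Icc 1 (2 * m - 1), z i
    = ∑ i ∈ Finset.Icc 1 (2 * m - 1), ν i := by
  have hmap : Finset.Icc 2 (2 * m - 1)
      = (Finset.Icc 1 (2 * m - 2)).map ⟨fun i => i + 1, add_left_injective 1⟩ := by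
    ext x
    simp only [Finset.mem_map, Finset.mem_Icc, Function.Embedding.coeFn_mk]
    constructor
    · rintro ⟨h1, h2⟩; exact ⟨x - 1, ⟨by omega, by omega⟩, by omega⟩
    · rintro ⟨a, ⟨h1, h2⟩, rfl⟩; omega
  set P := ∏ i ∈ Finset.Icc 2 (2 * m - 1), ν i with hP
  have ha : ν (2 * m) ≠ 0 := hν _ (by omega) (by omega)
  have hb : ν (2 * m + 1) ≠ 0 := hν _ (by omega) (by omega)
  have h1 : ν 1 ≠ 0 := hν _ (by omega) (by omega)
  have hPne : P ≠ 0 := by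
    refine Finset.prod_ne_zero_iff.mpr fun i hi => ?_
    simp only [Finset.mem_Icc] at hi
    exact hν i (by omega) (by omega)
  have hqne : q ≠ 0 := by
    rw [← hprod]
    refine Finset.prod_ne_zero_iff.mpr fun i hi => ?_
    simp only [Finset.mem_Icc] at hi
    exact hν i hi.1 hi.2
  -- decompose the big product
  have hins1 : Finset.Icc 1 (2 * m + 1)
      = insert (2 * m + 1) (insert (2 * m) (Finset.Icc 1 (2 * m - 1))) := by
    ext x; simp only [Finset.mem_insert, Finset.mem_Icc]; omega
  have hins2 : Finset.Icc 1 (2 * m - 1) = insert 1 (Finset.Icc 2 (2 * m - 1)) := by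
    ext x; simp only [Finset.mem_insert, Finset.mem_Icc]; omega
  have hkey : ν 1 * P * ν (2 * m) * ν (2 * m + 1) = q := by
    rw [hins1] at hprod
    rw [Finset.prod_insert (by simp only [Finset.mem_insert, Finset.mem_Icc]; omega),
      Finset.prod_insert (by simp only [Finset.mem_Icc]; omega), hins2,
      Finset.prod_insert (by simp only [Finset.mem_Icc]; omega)] at hprod
    rw [← hprod]; ring
  -- sums
  have hsumz : ∑ i ∈ Finset.Icc 1 (2 * m - 2), z i
      = ∑ i ∈ Finset.Icc 2 (2 * m - 1), ν i := by
    rw [hmap, Finset.sum_map]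
    exact Finset.sum_congr rfl fun i hi => by
      simp only [Finset.mem_Icc] at hi
      exact hz i hi.1 hi.2
  have hsumν : ∑ i ∈ Finset.Icc 1 (2 * m - 1), ν i
      = ν 1 + ∑ i ∈ Finset.Icc 2 (2 * m - 1), ν i := by
    rw [hins2, Finset.sum_insert (by simp only [Finset.mem_Icc]; omega)]
  -- products
  have hprodz : ∏ i ∈ Finset.Icc 1 (2 * m - 1), z i = P * z (2 * m - 1) := by
    have : Finset.Icc 1 (2 * m - 1) = insert (2 * m - 1) (Finset.Icc 1 (2 * m - 2)) := by
      ext x; simp only [Finset.mem_insert, Finset.mem_Icc]; omega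
    rw [this, Finset.prod_insert (by simp only [Finset.mem_Icc]; omega), hP, hmap,
      Finset.prod_map]
    rw [mul_comm]
    congr 1
    exact Finset.prod_congr rfl fun i hi => by
      simp only [Finset.mem_Icc] at hi
      exact hz i hi.1 hi.2
  rw [hsumz, hsumν, hprodz, hzlast]
  have hfrac : (q * ν (2 * m) / ν (2 * m + 1) + q) ^ 2
      / (P * (q * ν (2 * m) / ν (2 * m + 1))) = ν 1 := by
    have hnum : q * ν (2 * m) / ν (2 * m + 1) + q = q / ν (2 * m + 1) := by
      field_simp; linear_combination hsum
    rw [hnum]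
    field_simp
    linear_combination -hkey
  rw [hfrac]; ring
end

section
/- Plücker coordinates of factorized elements: for ū₂ = y₁(a₁)⋯y_{m-2}(a_{m-2}) y_m(d) y_{m-1}(c) y_{m-2}(b_{m-2})⋯y₁(b₁) in the lower unipotent subgroup of SO_{2m} (with the quadratic form and Chevalley generators as in the paper), the values δ_ℓ(ū₂) := ∑_{k=0}^{ℓ}(-1)^k p_{ℓ-k}(ū₂) p_{2m-2-ℓ+k}(ū₂) satisfy δ_ℓ(ū₂) = (a₁⋯a_ℓ)²·a_{ℓ+1}⋯a_{m-2}·c·d·b_{m-2}⋯b_{ℓ+1} for 1 ≤ ℓ ≤ m-3, given the formulas p_0 = 1, p_k = a₁⋯a_{k-1}(a_k+b_k) for 1 ≤ k ≤ m-2, p_{m-1} = a₁⋯a_{m-2}c, p'_{m-1} = a₁⋯a_{m-2}d, p_m = a₁⋯a_{m-2}cd, p_k = a₁⋯a_{m-2}cd·b_{m-2}⋯b_{2m-1-k} for m+1 ≤ k ≤ 2m-2. -/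
/-- Plücker coordinates of factorized elements for even quadrics Q_{2m-2}:
given the monomial/binomial formulas for the p_k, the alternating sums δ_ℓ telescope
to δ_ℓ = (a₁⋯a_ℓ)²·a_{ℓ+1}⋯a_{m-2}·c·d·b_{m-2}⋯b_{ℓ+1} for 1 ≤ ℓ ≤ m-3. -/
theorem stmt11 {R : Type*} [CommRing R] (m : ℕ) (hm : 3 ≤ m)
    (a b : ℕ → R) (c d : R) (p : ℕ → R) (p' : R)
    (hp0 : p 0 = 1)
    (hp1 : ∀ k, 1 ≤ k → k ≤ m - 2 →
      p k = (∏ i ∈ Finset.Icc 1 (k - 1), a i) * (a k + b k))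
    (hpm1 : p (m - 1) = (∏ i ∈ Finset.Icc 1 (m - 2), a i) * c)
    (hp' : p' = (∏ i ∈ Finset.Icc 1 (m - 2), a i) * d)
    (hpm : p m = (∏ i ∈ Finset.Icc 1 (m - 2), a i) * c * d)
    (hp2 : ∀ k, m + 1 ≤ k → k ≤ 2 * m - 2 →
      p k = (∏ i ∈ Finset.Icc 1 (m - 2), a i) * c * d
        * ∏ j ∈ Finset.Icc (2 * m - 1 - k) (m - 2), b j) :
    ∀ ℓ, 1 ≤ ℓ → ℓ ≤ m - 3 →
      ∑ k ∈ Finset.range (ℓ + 1), (-1 : R) ^ k * p (ℓ - k) * p (2 * m - 2 - ℓ + k)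
      = (∏ i ∈ Finset.Icc 1 ℓ, a i) ^ 2 * (∏ i ∈ Finset.Icc (ℓ + 1) (m - 2), a i)
        * c * d * ∏ j ∈ Finset.Icc (ℓ + 1) (m - 2), b j := by
  intro ℓ hℓ1 hℓ2
  set A : R := (∏ i ∈ Finset.Icc 1 (m - 2), a i) * c * d with hA
  set T : ℕ → R := fun k =>
    (∏ i ∈ Finset.Icc 1 (ℓ - k), a i) * A * ∏ j ∈ Finset.Icc (ℓ + 1 - k) (m - 2), b j with hT
  have hterm : ∀ k < ℓ, p (ℓ - k) * p (2 * m - 2 - ℓ + k) = T k + T (k + 1) := by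
    intro k hk
    obtain ⟨n, hn⟩ : ∃ n, ℓ - k = n + 1 := ⟨ℓ - k - 1, by omega⟩
    have h1 : p (ℓ - k) = (∏ i ∈ Finset.Icc 1 n, a i) * (a (n + 1) + b (n + 1)) := by
      rw [hp1 _ (by omega) (by omega), hn]
      norm_num
    have hidx : 2 * m - 1 - (2 * m - 2 - ℓ + k) = n + 2 := by omega
    have h2 : p (2 * m - 2 - ℓ + k) = A * ∏ j ∈ Finset.Icc (n + 2) (m - 2), b j := by
      rw [hp2 _ (by omega) (by omega), hidx]
    have tk : T k = (∏ i ∈ Finset.Icc 1 (n + 1), a i) * A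
        * ∏ j ∈ Finset.Icc (n + 2) (m - 2), b j := by
      have e1 : ℓ + 1 - k = n + 2 := by omega
      simp only [hT]
      rw [hn, e1]
    have tk1 : T (k + 1) = (∏ i ∈ Finset.Icc 1 n, a i) * A
        * ∏ j ∈ Finset.Icc (n + 1) (m - 2), b j := by
      have e2 : ℓ - (k + 1) = n := by omega
      have e3 : ℓ + 1 - (k + 1) = n + 1 := by omega
      simp only [hT]
      rw [e2, e3]
    have pa : (∏ i ∈ Finset.Icc 1 (n + 1), a i) = (∏ i ∈ Finset.Icc 1 n, a i) * a (n + 1) :=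
      Finset.prod_Icc_succ_top (by omega) a
    have pb : (∏ j ∈ Finset.Icc (n + 1) (m - 2), b j)
        = b (n + 1) * ∏ j ∈ Finset.Icc (n + 2) (m - 2), b j := by
      rw [Finset.Icc_add_one_left_eq_Ioc n (m - 2),
        ← Finset.prod_Ioc_consecutive _ (Nat.le_succ n) (by omega : n + 1 ≤ m - 2),
        Nat.Ioc_succ_singleton, Finset.prod_singleton, ← Finset.Icc_add_one_left_eq_Ioc (n + 1) (m - 2)]
      rfl
    rw [h1, h2, tk, tk1, pa, pb]
    ring
  have key : ∀ n ≤ ℓ, ∑ k ∈ Finset.range n, (-1 : R) ^ k * p (ℓ - k) * p (2 * m - 2 - ℓ + k)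
      = T 0 - (-1 : R) ^ n * T n := by
    intro n hn
    induction n with
    | zero => simp
    | succ n ih =>
      rw [Finset.sum_range_succ, ih (by omega), mul_assoc, hterm n (by omega)]
      ring
  rw [Finset.sum_range_succ, key ℓ le_rfl]
  have hidx : 2 * m - 1 - (2 * m - 2 - ℓ + ℓ) = 1 := by omega
  have hlast : p (2 * m - 2 - ℓ + ℓ) = A * ∏ j ∈ Finset.Icc 1 (m - 2), b j := by
    rw [hp2 _ (by omega) (by omega), hidx]
  have hTℓ : T ℓ = A * ∏ j ∈ Finset.Icc 1 (m - 2), b j := by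
    have e1 : ℓ + 1 - ℓ = 1 := by omega
    simp only [hT]
    rw [Nat.sub_self, e1]
    simp
  have hT0 : T 0 = (∏ i ∈ Finset.Icc 1 ℓ, a i) ^ 2 * (∏ i ∈ Finset.Icc (ℓ + 1) (m - 2), a i)
      * c * d * ∏ j ∈ Finset.Icc (ℓ + 1) (m - 2), b j := by
    simp only [hT, hA, Nat.sub_zero, Nat.add_sub_cancel]
    have split : (∏ i ∈ Finset.Icc 1 (m - 2), a i)
        = (∏ i ∈ Finset.Icc 1 ℓ, a i) * ∏ i ∈ Finset.Icc (ℓ + 1) (m - 2), a i := by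
      rw [(by exact Finset.Icc_add_one_left_eq_Ioc 0 (m - 2) : Finset.Icc 1 (m - 2) = Finset.Ioc 0 (m - 2)), (by exact Finset.Icc_add_one_left_eq_Ioc 0 ℓ : Finset.Icc 1 ℓ = Finset.Ioc 0 ℓ), Finset.Icc_add_one_left_eq_Ioc ℓ (m - 2),
        Finset.prod_Ioc_consecutive _ (by omega) (by omega)]
    rw [split]
    ring
  rw [Nat.sub_self, hp0, hlast, hTℓ, hT0]
  ring
end

section
/- Laurent polynomial form of the canonical superpotential for even quadrics: under the substitution of the previous context (p_k expressed as monomials/binomials in a_i, b_i, c, d), the rational function W = p_1/p_0 + ∑_{ℓ=1}^{m-3} p_{ℓ+1}p_{2m-2-ℓ}/δ_ℓ + p_m/p_{m-1} + p_m/p'_{m-1} + q·p_1/p_{2m-2} equals the Laurent polynomial a_1 + ⋯ + a_{m-2} + c + d + b_{m-2} + ⋯ + b_1 + q(a_1+b_1)/(a_1⋯a_{m-2}·c·d·b_{m-2}⋯b_1). -/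
private lemma prod_Icc_bot' (f : ℕ → ℂ) {a n : ℕ} (h : a ≤ n) :
    ∏ i ∈ Finset.Icc a n, f i = f a * ∏ i ∈ Finset.Icc (a + 1) n, f i := by
  rw [← Finset.Ico_add_one_right_eq_Icc, Finset.prod_eq_prod_Ico_succ_bot (by omega), Finset.Ico_add_one_right_eq_Icc]

private lemma prod_Icc_top' (f : ℕ → ℂ) {a n : ℕ} (h : a ≤ n) (h1 : 1 ≤ n) :
    ∏ i ∈ Finset.Icc a n, f i = (∏ i ∈ Finset.Icc a (n - 1), f i) * f n := by
  obtain ⟨k, rfl⟩ : ∃ k, n = k + 1 := ⟨n - 1, by omega⟩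
  rw [Finset.prod_Icc_succ_top h]
  simp

private lemma sum_Icc_bot' (f : ℕ → ℂ) {a n : ℕ} (h : a ≤ n) :
    ∑ i ∈ Finset.Icc a n, f i = f a + ∑ i ∈ Finset.Icc (a + 1) n, f i := by
  rw [← Finset.Ico_add_one_right_eq_Icc, Finset.sum_eq_sum_Ico_succ_bot (by omega), Finset.Ico_add_one_right_eq_Icc]

/-- Laurent polynomial form of the canonical superpotential of the even quadric
Q_{2m-2} in Lusztig coordinates: W expressed in Plücker coordinates equals
a_1 + ⋯ + a_{m-2} + c + d + b_{m-2} + ⋯ + b_1 + q(a_1+b_1)/(a_1⋯a_{m-2}·c·d·b_{m-2}⋯b_1). -/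
theorem stmt12 (m : ℕ) (hm : 3 ≤ m)
    (a b : ℕ → ℂ) (c d q : ℂ)
    (ha : ∀ i, 1 ≤ i → i ≤ m - 2 → a i ≠ 0)
    (hb : ∀ i, 1 ≤ i → i ≤ m - 2 → b i ≠ 0)
    (hc : c ≠ 0) (hd : d ≠ 0) (hq : q ≠ 0)
    (p : ℕ → ℂ) (p' : ℂ)
    (hp0 : p 0 = 1)
    (hp1 : ∀ k, 1 ≤ k → k ≤ m - 2 →
      p k = (∏ i ∈ Finset.Icc 1 (k - 1), a i) * (a k + b k))
    (hpm1 : p (m - 1) = (∏ i ∈ Finset.Icc 1 (m - 2), a i) * c)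
    (hp' : p' = (∏ i ∈ Finset.Icc 1 (m - 2), a i) * d)
    (hpm : p m = (∏ i ∈ Finset.Icc 1 (m - 2), a i) * c * d)
    (hp2 : ∀ k, m + 1 ≤ k → k ≤ 2 * m - 2 →
      p k = (∏ i ∈ Finset.Icc 1 (m - 2), a i) * c * d
        * ∏ j ∈ Finset.Icc (2 * m - 1 - k) (m - 2), b j)
    (δ : ℕ → ℂ)
    (hδ : ∀ ℓ, δ ℓ = ∑ k ∈ Finset.range (ℓ + 1),
      (-1 : ℂ) ^ k * p (ℓ - k) * p (2 * m - 2 - ℓ + k)) :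
    p 1 / p 0
      + (∑ ℓ ∈ Finset.Icc 1 (m - 3), p (ℓ + 1) * p (2 * m - 2 - ℓ) / δ ℓ)
      + p m / p (m - 1) + p m / p' + q * p 1 / p (2 * m - 2)
    = (∑ i ∈ Finset.Icc 1 (m - 2), a i) + c + d + (∑ i ∈ Finset.Icc 1 (m - 2), b i)
      + q * (a 1 + b 1)
        / ((∏ i ∈ Finset.Icc 1 (m - 2), a i) * c * d * ∏ i ∈ Finset.Icc 1 (m - 2), b i) := by
  set A : ℂ := ∏ i ∈ Finset.Icc 1 (m - 2), a i with hA_def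
  set B : ℂ := ∏ i ∈ Finset.Icc 1 (m - 2), b i with hB_def
  have hA : A ≠ 0 := Finset.prod_ne_zero_iff.2 fun i hi => by
    simp only [Finset.mem_Icc] at hi; exact ha i hi.1 hi.2
  have hB : B ≠ 0 := Finset.prod_ne_zero_iff.2 fun i hi => by
    simp only [Finset.mem_Icc] at hi; exact hb i hi.1 hi.2
  -- value of p 1
  have hp1' : p 1 = a 1 + b 1 := by
    rw [hp1 1 le_rfl (by omega)]; simp
  -- value of p (2m-2)
  have hp2m2 : p (2 * m - 2) = A * c * d * B := by
    rw [hp2 (2 * m - 2) (by omega) le_rfl]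
    have : 2 * m - 1 - (2 * m - 2) = 1 := by omega
    rw [this]
  -- the delta formula
  have hδℓ : ∀ ℓ, 1 ≤ ℓ → ℓ ≤ m - 3 →
      δ ℓ = A * c * d * ((∏ i ∈ Finset.Icc 1 ℓ, a i) *
        ∏ j ∈ Finset.Icc (ℓ + 1) (m - 2), b j) := by
    intro ℓ h1 h2
    set T : ℕ → ℂ := fun k =>
      (∏ i ∈ Finset.Icc 1 (ℓ - k), a i) * ∏ j ∈ Finset.Icc (ℓ - k + 1) (m - 2), b j with hT
    have key : ∀ k ∈ Finset.range ℓ,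
        (-1 : ℂ) ^ k * p (ℓ - k) * p (2 * m - 2 - ℓ + k)
          = (-1 : ℂ) ^ k * (A * c * d) * T k - (-1 : ℂ) ^ (k + 1) * (A * c * d) * T (k + 1) := by
      intro k hk
      rw [Finset.mem_range] at hk
      rw [hp1 (ℓ - k) (by omega) (by omega), hp2 (2 * m - 2 - ℓ + k) (by omega) (by omega)]
      have e1 : 2 * m - 1 - (2 * m - 2 - ℓ + k) = ℓ - k + 1 := by omega
      rw [e1]
      have eTk : T k = ((∏ i ∈ Finset.Icc 1 (ℓ - k - 1), a i) * a (ℓ - k)) *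
          ∏ j ∈ Finset.Icc (ℓ - k + 1) (m - 2), b j := by
        simp only [hT]
        rw [prod_Icc_top' a (a := 1) (n := ℓ - k) (by omega) (by omega)]
      have eTk1 : T (k + 1) = ((∏ i ∈ Finset.Icc 1 (ℓ - k - 1), a i) * b (ℓ - k)) *
          ∏ j ∈ Finset.Icc (ℓ - k + 1) (m - 2), b j := by
        simp only [hT]
        have e3 : ℓ - (k + 1) + 1 = ℓ - k := by omega
        have e2 : ℓ - (k + 1) = ℓ - k - 1 := by omega
        rw [e3, e2, prod_Icc_bot' b (a := ℓ - k) (n := m - 2) (by omega)]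
        ring
      rw [eTk, eTk1, pow_succ]
      ring
    rw [hδ, Finset.sum_range_succ, Finset.sum_congr rfl key,
      Finset.sum_range_sub' (fun k => (-1 : ℂ) ^ k * (A * c * d) * T k)]
    have e4 : ℓ - ℓ = 0 := Nat.sub_self ℓ
    have e5 : 2 * m - 2 - ℓ + ℓ = 2 * m - 2 := by omega
    rw [e4, e5, hp0, hp2m2]
    have eT0 : T 0 = (∏ i ∈ Finset.Icc 1 ℓ, a i) * ∏ j ∈ Finset.Icc (ℓ + 1) (m - 2), b j := by
      rw [hT]; simp
    have eTℓ : T ℓ = B := by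
      rw [hT]
      simp [hB_def, show Finset.Icc 1 0 = (∅ : Finset ℕ) from rfl]
    rw [eT0, eTℓ]
    ring
  -- the middle sum
  have hmid : ∑ ℓ ∈ Finset.Icc 1 (m - 3), p (ℓ + 1) * p (2 * m - 2 - ℓ) / δ ℓ
      = ∑ ℓ ∈ Finset.Icc 1 (m - 3), (a (ℓ + 1) + b (ℓ + 1)) := by
    refine Finset.sum_congr rfl fun ℓ hℓ => ?_
    rw [Finset.mem_Icc] at hℓ
    obtain ⟨h1, h2⟩ := hℓ
    have ha' : (∏ i ∈ Finset.Icc 1 ℓ, a i) ≠ 0 := Finset.prod_ne_zero_iff.2 fun i hi => by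
      simp only [Finset.mem_Icc] at hi; exact ha i hi.1 (by omega)
    have hb' : (∏ j ∈ Finset.Icc (ℓ + 1) (m - 2), b j) ≠ 0 :=
      Finset.prod_ne_zero_iff.2 fun i hi => by
        simp only [Finset.mem_Icc] at hi; exact hb i (by omega) hi.2
    rw [hp1 (ℓ + 1) (by omega) (by omega), hp2 (2 * m - 2 - ℓ) (by omega) (by omega),
      hδℓ ℓ h1 h2]
    have e1 : 2 * m - 1 - (2 * m - 2 - ℓ) = ℓ + 1 := by omega
    have e2 : ℓ + 1 - 1 = ℓ := by omega
    rw [e1, e2, div_eq_iff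
      (mul_ne_zero (mul_ne_zero (mul_ne_zero hA hc) hd) (mul_ne_zero ha' hb'))]
    ring
  -- reindexing the middle sum
  have hre : ∀ f : ℕ → ℂ, ∑ ℓ ∈ Finset.Icc 1 (m - 3), f (ℓ + 1)
      = ∑ i ∈ Finset.Icc 2 (m - 2), f i := by
    intro f
    have : Finset.Icc 2 (m - 2) = Finset.map (addRightEmbedding 1) (Finset.Icc 1 (m - 3)) := by
      rw [Finset.map_add_right_Icc]
      congr 1
      omega
    rw [this, Finset.sum_map]
    rfl
  -- split the full sums at the bottom
  have hsplita : ∑ i ∈ Finset.Icc 1 (m - 2), a i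
      = a 1 + ∑ i ∈ Finset.Icc 2 (m - 2), a i := sum_Icc_bot' a (by omega)
  have hsplitb : ∑ i ∈ Finset.Icc 1 (m - 2), b i
      = b 1 + ∑ i ∈ Finset.Icc 2 (m - 2), b i := sum_Icc_bot' b (by omega)
  have h3 : A * c * d / (A * c) = d := by field_simp
  have h4 : A * c * d / (A * d) = c := by field_simp
  rw [hmid, hp1', hp0, hpm, hpm1, hp', hp2m2, h3, h4,
    hre (fun i => a i + b i), Finset.sum_add_distrib, hsplita, hsplitb]
  ring
end

section
/- Critical points of the even-quadric canonical superpotential: for m ≥ 3, q ∈ ℂ*, and ζ with ζ^{2m-2} = 4q, setting p_0 = 1, p_j = ζ^j for 1 ≤ j ≤ m-2, p_j = ζ^j/2 for m-1 ≤ j ≤ 2m-3, p'_{m-1} = ζ^{m-1}/2, p_{2m-2} = q, the quadric relation p_{m-1}p'_{m-1} − p_{m-2}p_m + ⋯ + (−1)^{m-1} p_0 p_{2m-2} = 0 holds, δ_ℓ = q for 1 ≤ ℓ ≤ m-3, and the superpotential W = p_1/p_0 + ∑_{ℓ=1}^{m-3} p_{ℓ+1}p_{2m-2-ℓ}/δ_ℓ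 + p_m/p_{m-1} + p_m/p'_{m-1} + q p_1/p_{2m-2} equals (2m-2)ζ. -/
/-- Critical points of the even-quadric canonical superpotential: the stated point
lies on the dual quadric, δ_ℓ = q for 1 ≤ ℓ ≤ m-3, and the critical value is (2m-2)ζ,
where ζ^{2m-2} = 4q. -/
theorem stmt14 (m : ℕ) (hm : 3 ≤ m) (q ζ : ℂ) (hq : q ≠ 0) (hζ : ζ ^ (2 * m - 2) = 4 * q)
    (p : ℕ → ℂ) (p' : ℂ)
    (hp0 : p 0 = 1)
    (hp1 : ∀ j, 1 ≤ j → j ≤ m - 2 → p j = ζ ^ j)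
    (hp2 : ∀ j, m - 1 ≤ j → j ≤ 2 * m - 3 → p j = ζ ^ j / 2)
    (hp' : p' = ζ ^ (m - 1) / 2)
    (hplast : p (2 * m - 2) = q)
    (δ : ℕ → ℂ)
    (hδ : ∀ ℓ, δ ℓ = ∑ k ∈ Finset.range (ℓ + 1),
      (-1 : ℂ) ^ k * p (ℓ - k) * p (2 * m - 2 - ℓ + k)) :
    (p (m - 1) * p'
      + ∑ k ∈ Finset.Icc 1 (m - 1), (-1 : ℂ) ^ k * p (m - 1 - k) * p (m - 1 + k) = 0) ∧
    (∀ ℓ, 1 ≤ ℓ → ℓ ≤ m - 3 → δ ℓ = q) ∧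
    (p 1 / p 0
      + (∑ ℓ ∈ Finset.Icc 1 (m - 3), p (ℓ + 1) * p (2 * m - 2 - ℓ) / δ ℓ)
      + p m / p (m - 1) + p m / p' + q * p 1 / p (2 * m - 2)
      = ((2 * m - 2 : ℕ) : ℂ) * ζ) := by
  obtain ⟨n, rfl⟩ : ∃ n, m = n + 3 := ⟨m - 3, by omega⟩
  have e1 : 2 * (n + 3) - 2 = 2 * n + 4 := by omega
  have e2 : n + 3 - 1 = n + 2 := by omega
  have e3 : n + 3 - 3 = n := by omega
  have e4 : n + 3 - 2 = n + 1 := by omega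
  have e5 : 2 * (n + 3) - 3 = 2 * n + 3 := by omega
  simp only [e1, e2, e3, e4, e5] at hζ hp1 hp2 hp' hplast hδ ⊢
  have hζ0 : ζ ≠ 0 := by
    intro h
    apply hq
    have h4 : (4 : ℂ) * q = 0 := by rw [← hζ, h]; exact zero_pow (by omega)
    simpa using h4
  -- Part (b)
  have hδq : ∀ ℓ, 1 ≤ ℓ → ℓ ≤ n → δ ℓ = q := by
    intro ℓ h1 h2
    rw [hδ, Finset.sum_range_succ]
    have elast : (-1 : ℂ) ^ ℓ * p (ℓ - ℓ) * p (2 * n + 4 - ℓ + ℓ) = (-1 : ℂ) ^ ℓ * q := by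
      rw [Nat.sub_self, hp0, show 2 * n + 4 - ℓ + ℓ = 2 * n + 4 by omega, hplast]; ring
    have erest : ∑ k ∈ Finset.range ℓ, (-1 : ℂ) ^ k * p (ℓ - k) * p (2 * n + 4 - ℓ + k)
        = (∑ k ∈ Finset.range ℓ, (-1 : ℂ) ^ k) * (2 * q) := by
      rw [Finset.sum_mul]
      refine Finset.sum_congr rfl fun k hk => ?_
      simp only [Finset.mem_range] at hk
      have ep1 : p (ℓ - k) = ζ ^ (ℓ - k) := by
        rcases Nat.eq_zero_or_pos (ℓ - k) with h | h
        · rw [h, hp0, pow_zero]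
        · exact hp1 _ h (by omega)
      have ep2 : p (2 * n + 4 - ℓ + k) = ζ ^ (2 * n + 4 - ℓ + k) / 2 :=
        hp2 _ (by omega) (by omega)
      have epow : ζ ^ (ℓ - k) * ζ ^ (2 * n + 4 - ℓ + k) = 4 * q := by
        rw [← pow_add, show ℓ - k + (2 * n + 4 - ℓ + k) = 2 * n + 4 by omega, hζ]
      rw [ep1, ep2]
      linear_combination ((-1 : ℂ) ^ k / 2) * epow
    rw [elast, erest, neg_one_geom_sum]
    rcases Nat.even_or_odd ℓ with h | h
    · rw [if_pos h, h.neg_one_pow]; ring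
    · rw [if_neg (by simpa using h), h.neg_one_pow]; ring
  -- Part (a)
  have parta : p (n + 2) * p'
      + ∑ k ∈ Finset.Icc 1 (n + 2), (-1 : ℂ) ^ k * p (n + 2 - k) * p (n + 2 + k) = 0 := by
    rw [Finset.sum_Icc_succ_top (by omega)]
    have erest : ∑ k ∈ Finset.Icc 1 (n + 1), (-1 : ℂ) ^ k * p (n + 2 - k) * p (n + 2 + k)
        = (∑ k ∈ Finset.Icc 1 (n + 1), (-1 : ℂ) ^ k) * (2 * q) := by
      rw [Finset.sum_mul]
      refine Finset.sum_congr rfl fun k hk => ?_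
      simp only [Finset.mem_Icc] at hk
      rw [hp1 (n + 2 - k) (by omega) (by omega), hp2 (n + 2 + k) (by omega) (by omega)]
      have epow : ζ ^ (n + 2 - k) * ζ ^ (n + 2 + k) = 4 * q := by
        rw [← pow_add, show n + 2 - k + (n + 2 + k) = 2 * n + 4 by omega, hζ]
      linear_combination ((-1 : ℂ) ^ k / 2) * epow
    have esum : ∑ k ∈ Finset.Icc 1 (n + 1), (-1 : ℂ) ^ k
        = -(if Even (n + 1) then (0 : ℂ) else 1) := by
      have hIc : Finset.Icc 1 (n + 1) = Finset.Ico 1 (n + 2) := rfl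
      rw [hIc, Finset.sum_Ico_eq_sum_range]
      simp only [show n + 2 - 1 = n + 1 by omega, pow_add, pow_one]
      rw [← Finset.mul_sum, neg_one_geom_sum, neg_one_mul]
    rw [erest, esum, hp2 (n + 2) le_rfl (by omega), hp', Nat.sub_self, hp0,
        show n + 2 + (n + 2) = 2 * n + 4 by omega, hplast]
    have epow2 : ζ ^ (n + 2) * ζ ^ (n + 2) = 4 * q := by
      rw [← pow_add, show n + 2 + (n + 2) = 2 * n + 4 by omega, hζ]
    have hpow : (-1 : ℂ) ^ (n + 1 + 1) = (-1) ^ n := by simp [pow_succ]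
    rw [hpow]
    rcases Nat.even_or_odd n with h | h
    · rw [if_neg (by rcases h with ⟨t, ht⟩; rintro ⟨s, hs⟩; omega), h.neg_one_pow]
      linear_combination (1 / 4 : ℂ) * epow2
    · rw [if_pos (by rcases h with ⟨t, ht⟩; exact ⟨t + 1, by omega⟩), h.neg_one_pow]
      linear_combination (1 / 4 : ℂ) * epow2
  refine ⟨parta, hδq, ?_⟩
  -- Part (c)
  have hsum : ∑ ℓ ∈ Finset.Icc 1 n, p (ℓ + 1) * p (2 * n + 4 - ℓ) / δ ℓ = n * (2 * ζ) := by
    have hterm : ∀ ℓ ∈ Finset.Icc 1 n, p (ℓ + 1) * p (2 * n + 4 - ℓ) / δ ℓ = 2 * ζ := by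
      intro ℓ hℓ
      simp only [Finset.mem_Icc] at hℓ
      rw [hp1 (ℓ + 1) (by omega) (by omega), hp2 (2 * n + 4 - ℓ) (by omega) (by omega),
          hδq ℓ hℓ.1 hℓ.2]
      have epow : ζ ^ (ℓ + 1) * ζ ^ (2 * n + 4 - ℓ) = ζ * (4 * q) := by
        rw [← pow_add, show ℓ + 1 + (2 * n + 4 - ℓ) = 2 * n + 4 + 1 by omega, pow_succ, hζ]
        ring
      rw [div_eq_iff hq]
      linear_combination (1 / 2 : ℂ) * epow
    rw [Finset.sum_congr rfl hterm, Finset.sum_const, Nat.card_Icc,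
        show n + 1 - 1 = n from rfl, nsmul_eq_mul]
  rw [hsum, hp0, hp1 1 le_rfl (by omega), hp2 (n + 3) (by omega) (by omega),
      hp2 (n + 2) le_rfl (by omega), hp', hplast,
      show n + 3 = (n + 2) + 1 from rfl, pow_succ]
  have hp22 : ζ ^ (n + 2) ≠ 0 := pow_ne_zero _ hζ0
  push_cast
  field_simp
  ring
end

section
/- The Gauss–Manin combination identity in the initial cluster chart for even quadrics (case i = m-2): in the coordinate ring localized at the cluster C₁ = {p_1,…,p_{m-2}, δ_0,…,δ_{m-3}, p_{m-1}, p'_{m-1}} with p_0 = 1 and δ_0 = p_{2m-2}, writing W in cluster coordinates as W = p_1 + ∑_{ℓ=1}^{m-3}( p_{ℓ+1}δ_{ℓ-1}/(p_ℓδ_ℓ) + p_{ℓ+1}/p_ℓ ) + δ_{m-3}/(p_{m-2}p_{m-1}) + δ_{m-3}/(p_{m-2}p'_{m-1}) + p_{m-1}/p_{m-2} + p'_{m-1}/p_{m-2} + q p_1/δ_0, one has the identity q(∂W/∂q)·p_{m-2} − (p_{m-1}+p'_{m-1}) = −p_{m-2}·( p_{m-1}∂W/∂p_{m-1} + p'_{m-1}∂W/∂p'_{m-1}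 + ∑_{j=0}^{m-3} δ_j ∂W/∂δ_j ). -/
lemma auxShift17 (E : ℕ → ℂ) (n : ℕ) :
    ∑ j ∈ Finset.range n, E (j + 1) = ∑ j ∈ Finset.Icc 1 n, E j := by
  induction n with
  | zero => simp
  | succ k ih => rw [Finset.sum_range_succ, ih, Finset.sum_Icc_succ_top (by omega)]

/-- The Gauss–Manin combination identity in the initial cluster chart for even quadrics
(case i = m-2): writing W in cluster coordinates,
q(∂W/∂q)·p_{m-2} − (p_{m-1}+p'_{m-1})
  = −p_{m-2}·( p_{m-1}∂W/∂p_{m-1} + p'_{m-1}∂W/∂p'_{m-1} + ∑_{j=0}^{m-3} δ_j ∂W/∂δ_j ). -/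
theorem stmt17 (m : ℕ) (hm : 4 ≤ m)
    (p δ : ℕ → ℂ) (r r' q : ℂ)
    (hp : ∀ j, 1 ≤ j → j ≤ m - 2 → p j ≠ 0)
    (hδ : ∀ j, j ≤ m - 3 → δ j ≠ 0)
    (hr : r ≠ 0) (hr' : r' ≠ 0)
    (W : (ℕ → ℂ) → (ℕ → ℂ) → ℂ → ℂ → ℂ → ℂ)
    (hW : ∀ (P Δ : ℕ → ℂ) (R R' Q : ℂ),
      W P Δ R R' Q = P 1
        + (∑ ℓ ∈ Finset.Icc 1 (m - 3),
            (P (ℓ + 1) * Δ (ℓ - 1) / (P ℓ * Δ ℓ) + P (ℓ + 1) / P ℓ))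
        + Δ (m - 3) / (P (m - 2) * R) + Δ (m - 3) / (P (m - 2) * R')
        + R / P (m - 2) + R' / P (m - 2) + Q * P 1 / Δ 0) :
    q * deriv (fun x => W p δ r r' x) q * p (m - 2) - (r + r')
      = - p (m - 2) * (r * deriv (fun x => W p δ x r' q) r
          + r' * deriv (fun x => W p δ r x q) r'
          + ∑ j ∈ Finset.range (m - 2),
              δ j * deriv (fun x => W p (Function.update δ j x) r r' q) (δ j)) := by
  obtain ⟨n, hn⟩ : ∃ n, m - 3 = n := ⟨_, rfl⟩
  have hn2 : m - 2 = n + 1 := by omega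
  have hn1 : 1 ≤ n := by omega
  simp only [hn, hn2] at hW hp hδ ⊢
  have hpn : p (n + 1) ≠ 0 := hp (n + 1) (by omega) le_rfl
  have hδ0 : δ 0 ≠ 0 := hδ 0 (by omega)
  have hδn : δ n ≠ 0 := hδ n le_rfl
  -- q derivative
  have hq : deriv (fun x => W p δ r r' x) q = p 1 / δ 0 := by
    have hf : (fun x => W p δ r r' x) = fun x => W p δ r r' 0 + x * (p 1 / δ 0) := by
      funext x; simp only [hW]; ring
    rw [hf]
    have := ((hasDerivAt_id q).mul_const (p 1 / δ 0)).const_add (W p δ r r' 0)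
    simpa using this.deriv
  -- r derivative
  have hdr : deriv (fun x => W p δ x r' q) r
      = (δ n / p (n + 1)) * (-(r ^ 2)⁻¹) + 1 * (p (n + 1))⁻¹ := by
    have hf : (fun x => W p δ x r' q)
        = fun x => (W p δ 1 r' q - δ n / p (n + 1) - 1 * (p (n + 1))⁻¹)
            + (δ n / p (n + 1)) * x⁻¹ + x * (p (n + 1))⁻¹ := by
      funext x; simp only [hW]; ring
    rw [hf]
    exact ((((hasDerivAt_inv hr).const_mul _).const_add _).add
      ((hasDerivAt_id r).mul_const _)).deriv
  -- r' derivative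
  have hdr' : deriv (fun x => W p δ r x q) r'
      = (δ n / p (n + 1)) * (-(r' ^ 2)⁻¹) + 1 * (p (n + 1))⁻¹ := by
    have hf : (fun x => W p δ r x q)
        = fun x => (W p δ r 1 q - δ n / p (n + 1) - 1 * (p (n + 1))⁻¹)
            + (δ n / p (n + 1)) * x⁻¹ + x * (p (n + 1))⁻¹ := by
      funext x; simp only [hW]; ring
    rw [hf]
    exact ((((hasDerivAt_inv hr').const_mul _).const_add _).add
      ((hasDerivAt_id r').mul_const _)).deriv
  -- δ derivatives
  have key : ∀ j ∈ Finset.range (n + 1),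
      deriv (fun x => W p (Function.update δ j x) r r' q) (δ j)
        = (∑ ℓ ∈ Finset.Icc 1 n, (if ℓ = j then (p (j + 1) * δ (j - 1) / p j) * -(δ j ^ 2)⁻¹
            else if ℓ = j + 1 then p (j + 1 + 1) / (p (j + 1) * δ (j + 1)) else 0))
          + (if j = n then (p (n + 1) * r)⁻¹ else 0)
          + (if j = n then (p (n + 1) * r')⁻¹ else 0)
          + (if j = 0 then q * p 1 * -(δ 0 ^ 2)⁻¹ else 0) := by
    intro j hj
    rw [Finset.mem_range, Nat.lt_succ_iff] at hj
    have hδj : δ j ≠ 0 := hδ j hj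
    have hf : (fun x => W p (Function.update δ j x) r r' q)
        = fun x => p 1 + (∑ ℓ ∈ Finset.Icc 1 n,
              (p (ℓ + 1) * Function.update δ j x (ℓ - 1) / (p ℓ * Function.update δ j x ℓ)
                + p (ℓ + 1) / p ℓ))
            + Function.update δ j x n / (p (n + 1) * r)
            + Function.update δ j x n / (p (n + 1) * r')
            + r / p (n + 1) + r' / p (n + 1) + q * p 1 / Function.update δ j x 0 := by
      funext x; rw [hW]
    rw [hf]
    have HS : HasDerivAt (fun x : ℂ => ∑ ℓ ∈ Finset.Icc 1 n,
          (p (ℓ + 1) * Function.update δ j x (ℓ - 1) / (p ℓ * Function.update δ j x ℓ)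
            + p (ℓ + 1) / p ℓ))
        (∑ ℓ ∈ Finset.Icc 1 n, (if ℓ = j then (p (j + 1) * δ (j - 1) / p j) * -(δ j ^ 2)⁻¹
            else if ℓ = j + 1 then p (j + 1 + 1) / (p (j + 1) * δ (j + 1)) else 0)) (δ j) := by
      apply HasDerivAt.fun_sum
      intro ℓ hℓ
      rw [Finset.mem_Icc] at hℓ
      by_cases h1 : ℓ = j
      · subst h1
        rw [if_pos rfl]
        have hne : ℓ - 1 ≠ ℓ := by omega
        simp only [Function.update_self, Function.update_of_ne hne]
        have hg : (fun x : ℂ => p (ℓ + 1) * δ (ℓ - 1) / (p ℓ * x) + p (ℓ + 1) / p ℓ)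
            = fun x => (p (ℓ + 1) * δ (ℓ - 1) / p ℓ) * x⁻¹ + p (ℓ + 1) / p ℓ := by
          funext x; ring
        rw [hg]
        exact ((hasDerivAt_inv hδj).const_mul _).add_const _
      · by_cases h2 : ℓ = j + 1
        · subst h2
          rw [if_neg h1, if_pos rfl]
          rw [show j + 1 - 1 = j from rfl]
          simp only [Function.update_self,
            Function.update_of_ne (show j + 1 ≠ j by omega)]
          have hg : (fun x : ℂ => p (j + 1 + 1) * x / (p (j + 1) * δ (j + 1)) + p (j + 1 + 1) / p (j + 1))
              = fun x => x * (p (j + 1 + 1) / (p (j + 1) * δ (j + 1))) + p (j + 1 + 1) / p (j + 1) := by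
            funext x; ring
          rw [hg]
          simpa using ((hasDerivAt_id (δ j)).mul_const
            (p (j + 1 + 1) / (p (j + 1) * δ (j + 1)))).add_const (p (j + 1 + 1) / p (j + 1))
        · rw [if_neg h1, if_neg h2]
          have hne1 : ℓ - 1 ≠ j := by omega
          simp only [Function.update_of_ne h1, Function.update_of_ne hne1]
          exact hasDerivAt_const _ _
    have HT1 : HasDerivAt (fun x : ℂ => Function.update δ j x n / (p (n + 1) * r))
        (if j = n then (p (n + 1) * r)⁻¹ else 0) (δ j) := by
      by_cases h : j = n
      · subst h; rw [if_pos rfl]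
        simp only [Function.update_self]
        simpa [one_div] using (hasDerivAt_id (δ j)).div_const (p (j + 1) * r)
      · rw [if_neg h]
        simp only [Function.update_of_ne (Ne.symm h)]
        exact hasDerivAt_const _ _
    have HT2 : HasDerivAt (fun x : ℂ => Function.update δ j x n / (p (n + 1) * r'))
        (if j = n then (p (n + 1) * r')⁻¹ else 0) (δ j) := by
      by_cases h : j = n
      · subst h; rw [if_pos rfl]
        simp only [Function.update_self]
        simpa [one_div] using (hasDerivAt_id (δ j)).div_const (p (j + 1) * r')
      · rw [if_neg h]
        simp only [Function.update_of_ne (Ne.symm h)]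
        exact hasDerivAt_const _ _
    have HU : HasDerivAt (fun x : ℂ => q * p 1 / Function.update δ j x 0)
        (if j = 0 then q * p 1 * -(δ 0 ^ 2)⁻¹ else 0) (δ j) := by
      by_cases h : j = 0
      · subst h; rw [if_pos rfl]
        simp only [Function.update_self]
        have hg : (fun x : ℂ => q * p 1 / x) = fun x => q * p 1 * x⁻¹ := by funext x; ring
        rw [hg]
        exact (hasDerivAt_inv hδ0).const_mul _
      · rw [if_neg h]
        simp only [Function.update_of_ne (Ne.symm h)]
        exact hasDerivAt_const _ _
    exact ((((((HS.const_add (p 1)).add HT1).add HT2).add_const (r / p (n + 1))).add_const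
      (r' / p (n + 1))).add HU).deriv
  -- summing the δ-derivatives
  have hsum : ∑ j ∈ Finset.range (n + 1),
      δ j * deriv (fun x => W p (Function.update δ j x) r r' q) (δ j)
      = δ n * (p (n + 1) * r)⁻¹ + δ n * (p (n + 1) * r')⁻¹ - q * p 1 / δ 0 := by
    rw [Finset.sum_congr rfl (fun j hj => by rw [key j hj])]
    have expand : ∀ j ∈ Finset.range (n + 1),
        δ j * ((∑ ℓ ∈ Finset.Icc 1 n, (if ℓ = j then (p (j + 1) * δ (j - 1) / p j) * -(δ j ^ 2)⁻¹
              else if ℓ = j + 1 then p (j + 1 + 1) / (p (j + 1) * δ (j + 1)) else 0))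
            + (if j = n then (p (n + 1) * r)⁻¹ else 0)
            + (if j = n then (p (n + 1) * r')⁻¹ else 0)
            + (if j = 0 then q * p 1 * -(δ 0 ^ 2)⁻¹ else 0))
        = ((if j ∈ Finset.Icc 1 n then -(p (j + 1) * δ (j - 1) / (p j * δ j)) else 0)
            + (if j + 1 ∈ Finset.Icc 1 n then p (j + 1 + 1) * δ j / (p (j + 1) * δ (j + 1)) else 0))
          + (if j = n then δ n * (p (n + 1) * r)⁻¹ else 0)
          + (if j = n then δ n * (p (n + 1) * r')⁻¹ else 0)
          + (if j = 0 then -(q * p 1 / δ 0) else 0) := by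
      intro j hj
      rw [Finset.mem_range, Nat.lt_succ_iff] at hj
      have hδj : δ j ≠ 0 := hδ j hj
      simp only [mul_add]
      congr 1
      · congr 1
        · congr 1
          · rw [Finset.mul_sum]
            have hpt : ∀ ℓ ∈ Finset.Icc 1 n,
                δ j * (if ℓ = j then (p (j + 1) * δ (j - 1) / p j) * -(δ j ^ 2)⁻¹
                    else if ℓ = j + 1 then p (j + 1 + 1) / (p (j + 1) * δ (j + 1)) else 0)
                = (if ℓ = j then -(p (j + 1) * δ (j - 1) / (p j * δ j)) else 0)
                  + (if ℓ = j + 1 then p (j + 1 + 1) * δ j / (p (j + 1) * δ (j + 1)) else 0) := by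
              intro ℓ _
              by_cases hh : ℓ = j
              · rw [if_pos hh, if_pos hh, if_neg (by omega), add_zero]
                linear_combination
                  (-(p (j + 1) * δ (j - 1) / (p j * δ j))) * mul_inv_cancel₀ hδj
              · rw [if_neg hh, if_neg hh]
                by_cases hh2 : ℓ = j + 1
                · rw [if_pos hh2, if_pos hh2, zero_add]
                  ring
                · rw [if_neg hh2, if_neg hh2, mul_zero, add_zero]
            rw [Finset.sum_congr rfl hpt, Finset.sum_add_distrib,
              Finset.sum_ite_eq', Finset.sum_ite_eq']
          · by_cases h : j = n
            · rw [if_pos h, if_pos h, h]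
            · rw [if_neg h, if_neg h, mul_zero]
        · by_cases h : j = n
          · rw [if_pos h, if_pos h, h]
          · rw [if_neg h, if_neg h, mul_zero]
      · by_cases h : j = 0
        · rw [if_pos h, if_pos h, h]
          field_simp
        · rw [if_neg h, if_neg h, mul_zero]
    rw [Finset.sum_congr rfl expand]
    simp only [Finset.sum_add_distrib]
    have hA : ∑ j ∈ Finset.range (n + 1),
        (if j ∈ Finset.Icc 1 n then -(p (j + 1) * δ (j - 1) / (p j * δ j)) else 0)
        = -∑ j ∈ Finset.Icc 1 n, p (j + 1) * δ (j - 1) / (p j * δ j) := by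
      rw [Finset.sum_ite_mem, Finset.inter_eq_right.mpr
        (by intro x hx; rw [Finset.mem_Icc] at hx; rw [Finset.mem_range]; omega)]
      exact Finset.sum_neg_distrib _
    have hB : ∑ j ∈ Finset.range (n + 1),
        (if j + 1 ∈ Finset.Icc 1 n then p (j + 1 + 1) * δ j / (p (j + 1) * δ (j + 1)) else 0)
        = ∑ j ∈ Finset.Icc 1 n, p (j + 1) * δ (j - 1) / (p j * δ j) := by
      have h1 : ∀ j ∈ Finset.range (n + 1),
          (if j + 1 ∈ Finset.Icc 1 n then p (j + 1 + 1) * δ j / (p (j + 1) * δ (j + 1)) else 0)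
          = (if j ∈ Finset.range n then p (j + 1 + 1) * δ j / (p (j + 1) * δ (j + 1)) else 0) := by
        intro j _
        by_cases h : j < n
        · rw [if_pos (by rw [Finset.mem_Icc]; omega), if_pos (by rwa [Finset.mem_range])]
        · rw [if_neg (by rw [Finset.mem_Icc]; omega), if_neg (by rw [Finset.mem_range]; omega)]
      rw [Finset.sum_congr rfl h1, Finset.sum_ite_mem, Finset.inter_eq_right.mpr
        (by intro x hx; rw [Finset.mem_range] at hx ⊢; omega)]
      have := auxShift17 (fun t => p (t + 1) * δ (t - 1) / (p t * δ t)) n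
      rw [← this]
      exact Finset.sum_congr rfl (fun j _ => by simp [Nat.add_sub_cancel])
    rw [hA, hB]
    rw [Finset.sum_ite_eq', Finset.sum_ite_eq', Finset.sum_ite_eq',
      if_pos (Finset.self_mem_range_succ n), if_pos (Finset.self_mem_range_succ n),
      if_pos (Finset.mem_range.mpr (by omega))]
    ring
  rw [hq, hdr, hdr', hsum]
  linear_combination (r + r') * mul_inv_cancel₀ hpn
    - p (n + 1) * (p (n + 1))⁻¹ * δ n * r⁻¹ * mul_inv_cancel₀ hr
    - p (n + 1) * (p (n + 1))⁻¹ * δ n * r'⁻¹ * mul_inv_cancel₀ hr'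
end
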